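/- The capacity of the VBSC with causal encoder CSI is at least the capacity with no CSI: 1 − H_2(∫_0^{1/2} f_P(p)(1−p) dp + ∫_{1/2}^1 f_P(p) p dp) ≥ 1 − H_2(E[P]), with equality if and only if f_P(p) = 0 for almost every p ∈ (1/2, 1] (assuming E[P] ≤ 1/2; the case E[P] > 1/2 follows by symmetry of H_2). -/
import Mathlib


open MeasureTheory

noncomputable def H2 (p : ℝ) : ℝ := -(p * Real.logb 2 p) - (1 - p) * Real.logb 2 (1 - p)

lemma H2_eq (p : ℝ) : H2 p = Real.binEntropy p / Real.log 2 := by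
  simp only [H2, Real.binEntropy, Real.logb, Real.log_inv]
  ring

lemma H2_one_sub (p : ℝ) : H2 (1 - p) = H2 p := by
  rw [H2_eq, H2_eq, Real.binEntropy_one_sub]

/-- Causal encoder CSI does not decrease capacity (for E[P] ≤ 1/2):
1 - H2(∫₀^{1/2} f(1-p) + ∫_{1/2}¹ f p) ≥ 1 - H2(E[P]), with equality iff
f = 0 almost everywhere on (1/2,1]. -/
theorem causal_csi_capacity_ge_no_csi (f : ℝ → ℝ)
    (hf0 : ∀ p ∈ Set.Icc (0:ℝ) 1, 0 ≤ f p)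
    (hfi : IntervalIntegrable f volume 0 1)
    (hfi' : IntervalIntegrable (fun p => p * f p) volume 0 1)
    (hnorm : ∫ p in (0:ℝ)..1, f p = 1)
    (hmean : (∫ p in (0:ℝ)..1, f p * p) ≤ 1/2) :
    (1 - H2 (∫ p in (0:ℝ)..1, f p * p)
      ≤ 1 - H2 ((∫ p in (0:ℝ)..(1/2), f p * (1 - p)) + ∫ p in (1/2:ℝ)..1, f p * p)) ∧
    (1 - H2 (∫ p in (0:ℝ)..1, f p * p)
      = 1 - H2 ((∫ p in (0:ℝ)..(1/2), f p * (1 - p)) + ∫ p in (1/2:ℝ)..1, f p * p) ↔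
      ∀ᵐ p ∂(volume.restrict (Set.Ioc (1/2:ℝ) 1)), f p = 0) := by
  have h01 : (0:ℝ) ≤ 1/2 := by norm_num
  have h121 : (1/2:ℝ) ≤ 1 := by norm_num
  have hsub1 : Set.uIcc (0:ℝ) (1/2) ⊆ Set.uIcc (0:ℝ) 1 := by
    rw [Set.uIcc_of_le h01, Set.uIcc_of_le (by norm_num : (0:ℝ) ≤ 1)]
    exact Set.Icc_subset_Icc le_rfl h121
  have hsub2 : Set.uIcc (1/2:ℝ) 1 ⊆ Set.uIcc (0:ℝ) 1 := by
    rw [Set.uIcc_of_le h121, Set.uIcc_of_le (by norm_num : (0:ℝ) ≤ 1)]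
    exact Set.Icc_subset_Icc h01 le_rfl
  have hfiL : IntervalIntegrable f volume 0 (1/2) := hfi.mono_set hsub1
  have hfiR : IntervalIntegrable f volume (1/2) 1 := hfi.mono_set hsub2
  have hfiL' : IntervalIntegrable (fun p => p * f p) volume 0 (1/2) := hfi'.mono_set hsub1
  have hfiR' : IntervalIntegrable (fun p => p * f p) volume (1/2) 1 := hfi'.mono_set hsub2
  have hfiLp : IntervalIntegrable (fun p => f p * p) volume 0 (1/2) := by
    have h : (fun p : ℝ => f p * p) = (fun p => p * f p) := funext fun p => mul_comm _ _
    rw [h]; exact hfiL'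
  have hfiRp : IntervalIntegrable (fun p => f p * p) volume (1/2) 1 := by
    have h : (fun p : ℝ => f p * p) = (fun p => p * f p) := funext fun p => mul_comm _ _
    rw [h]; exact hfiR'
  have hfiLm : IntervalIntegrable (fun p => f p * (1 - p)) volume 0 (1/2) := by
    have h : (fun p : ℝ => f p * (1 - p)) = (fun p => f p - p * f p) := funext fun p => by ring
    rw [h]; exact hfiL.sub hfiL'
  have hfiD : IntervalIntegrable (fun p => f p * (2*p - 1)) volume (1/2) 1 := by
    have h : (fun p : ℝ => f p * (2*p - 1)) = (fun p => 2 * (p * f p) - f p) :=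
      funext fun p => by ring
    rw [h]; exact (hfiR'.const_mul 2).sub hfiR
  set E : ℝ := ∫ p in (0:ℝ)..1, f p * p with hE
  set q : ℝ := (∫ p in (0:ℝ)..(1/2), f p * (1 - p)) + ∫ p in (1/2:ℝ)..1, f p * p with hq
  set D : ℝ := ∫ p in (1/2:ℝ)..1, f p * (2*p - 1) with hD
  have hD0 : 0 ≤ D := by
    apply intervalIntegral.integral_nonneg h121
    intro u hu
    have h1 : 0 ≤ f u := hf0 u ⟨le_trans h01 hu.1, hu.2⟩
    have h2 : (0:ℝ) ≤ 2*u - 1 := by linarith [hu.1]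
    positivity
  -- key identity : E + q = 1 + D
  have hkey : E + q = 1 + D := by
    have hsplitE : E = (∫ p in (0:ℝ)..(1/2), f p * p) + ∫ p in (1/2:ℝ)..1, f p * p := by
      rw [hE, ← intervalIntegral.integral_add_adjacent_intervals hfiLp hfiRp]
    have hsplitN : ((∫ p in (0:ℝ)..(1/2), f p) + ∫ p in (1/2:ℝ)..1, f p) = 1 :=
      (intervalIntegral.integral_add_adjacent_intervals hfiL hfiR).trans hnorm
    have hL : (∫ p in (0:ℝ)..(1/2), f p * p) + (∫ p in (0:ℝ)..(1/2), f p * (1 - p))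
        = ∫ p in (0:ℝ)..(1/2), f p := by
      rw [← intervalIntegral.integral_add hfiLp hfiLm]
      exact intervalIntegral.integral_congr (fun x _ => by ring)
    have hR : (∫ p in (1/2:ℝ)..1, f p * p) + (∫ p in (1/2:ℝ)..1, f p * p)
        = (∫ p in (1/2:ℝ)..1, f p) + D := by
      rw [hD, ← intervalIntegral.integral_add hfiR hfiD,
        ← intervalIntegral.integral_add hfiRp hfiRp]
      exact intervalIntegral.integral_congr (fun x _ => by ring)
    rw [hsplitE, hq]
    linarith [hL, hR, hsplitN]
  have hE0 : 0 ≤ E := by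
    apply intervalIntegral.integral_nonneg (by norm_num)
    intro u hu
    exact mul_nonneg (hf0 u hu) hu.1
  have hq1 : q ≤ 1 := by
    have h1 : (∫ p in (0:ℝ)..(1/2), f p * (1 - p)) ≤ ∫ p in (0:ℝ)..(1/2), f p := by
      apply intervalIntegral.integral_mono_on h01 hfiLm hfiL
      intro x hx
      have h1 : 0 ≤ f x := hf0 x ⟨hx.1, le_trans hx.2 h121⟩
      nlinarith [hx.1]
    have h2 : (∫ p in (1/2:ℝ)..1, f p * p) ≤ ∫ p in (1/2:ℝ)..1, f p := by
      apply intervalIntegral.integral_mono_on h121 hfiRp hfiR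
      intro x hx
      have h1 : 0 ≤ f x := hf0 x ⟨le_trans h01 hx.1, hx.2⟩
      nlinarith [hx.2]
    have hsplitN : ((∫ p in (0:ℝ)..(1/2), f p) + ∫ p in (1/2:ℝ)..1, f p) = 1 :=
      (intervalIntegral.integral_add_adjacent_intervals hfiL hfiR).trans hnorm
    rw [hq]; linarith
  -- so r := 1 - q satisfies 0 ≤ r ≤ E ≤ 1/2 and E - r = D
  have hrE : 1 - q = E - D := by linarith
  have hlog2 : (0:ℝ) < Real.log 2 := Real.log_pos (by norm_num)
  have hmemr : (1 - q) ∈ Set.Icc (0:ℝ) 2⁻¹ := by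
    constructor <;> rw [hrE] <;> [linarith; · rw [show (2:ℝ)⁻¹ = 1/2 by norm_num]; linarith]
  have hmemE : E ∈ Set.Icc (0:ℝ) 2⁻¹ := by
    constructor; · exact hE0
    · rw [show (2:ℝ)⁻¹ = 1/2 by norm_num]; exact hmean
  have hle : 1 - q ≤ E := by linarith
  have hH2q : H2 q = H2 (1 - q) := by rw [← H2_one_sub (1 - q), sub_sub_cancel]
  -- main inequality
  have hbmono : Real.binEntropy (1 - q) ≤ Real.binEntropy E :=
    Real.binEntropy_strictMonoOn.monotoneOn hmemr hmemE hle
  have hineq : H2 (1 - q) ≤ H2 E := by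
    rw [H2_eq, H2_eq]
    exact div_le_div_of_nonneg_right hbmono hlog2.le
  -- characterize D = 0 via a.e. vanishing
  have hDioc : D = ∫ p in Set.Ioc (1/2:ℝ) 1, f p * (2*p - 1) :=
    intervalIntegral.integral_of_le h121
  have hInt : IntegrableOn (fun p => f p * (2*p - 1)) (Set.Ioc (1/2:ℝ) 1) volume :=
    (intervalIntegrable_iff_integrableOn_Ioc_of_le h121).mp hfiD
  have hae_nonneg : 0 ≤ᵐ[volume.restrict (Set.Ioc (1/2:ℝ) 1)] fun p => f p * (2*p - 1) := by
    rw [Filter.EventuallyLE, ae_restrict_iff' measurableSet_Ioc]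
    refine Filter.Eventually.of_forall (fun x hx => ?_)
    have h1 : 0 ≤ f x := hf0 x ⟨le_trans h01 hx.1.le, hx.2⟩
    have h2 : (0:ℝ) ≤ 2*x - 1 := by linarith [hx.1]
    positivity
  have hDzero_iff : D = 0 ↔ (∀ᵐ p ∂(volume.restrict (Set.Ioc (1/2:ℝ) 1)), f p = 0) := by
    rw [hDioc, MeasureTheory.integral_eq_zero_iff_of_nonneg_ae hae_nonneg hInt]
    constructor
    · intro h
      filter_upwards [h, ae_restrict_mem measurableSet_Ioc] with x hx hxm
      have h2 : (0:ℝ) < 2*x - 1 := by linarith [hxm.1]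
      have := hx
      simp only [Pi.zero_apply] at this
      rcases mul_eq_zero.mp this with h | h
      · exact h
      · exact absurd h (ne_of_gt h2)
    · intro h
      filter_upwards [h] with x hx
      simp [hx]
  constructor
  · have : H2 q ≤ H2 E := hH2q ▸ hineq
    linarith
  · constructor
    · intro heq
      have hH2 : H2 E = H2 q := by linarith
      rw [hH2q, H2_eq, H2_eq] at hH2
      have hbe : Real.binEntropy E = Real.binEntropy (1 - q) := by
        have h2 := congrArg (fun x => x * Real.log 2) hH2
        simpa [div_mul_cancel₀, ne_of_gt hlog2] using h2
      have : 1 - q = E := Real.binEntropy_strictMonoOn.injOn hmemr hmemE hbe.symm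
      have hDz : D = 0 := by linarith
      exact hDzero_iff.mp hDz
    · intro h
      have hDz : D = 0 := hDzero_iff.mpr h
      have : 1 - q = E := by linarith
      rw [hH2q, ← this]
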